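/- arXiv:1206.2764 — 4 statements merged into one kernel-verified Lean document; each statement's English description precedes it below -/
import Mathlib

section
/- Let F : C → D and G : D → C be an adjunction of symmetric monoidal categories induced by a Hopf monoidal comonad (i.e. the adjunction is strong coclosed / satisfies the projection formula). Then for every dualizable object X ∈ C and every D ∈ D there is a natural isomorphism C(C, X ⊗ GD) ≅ C(C, G(FX ⊗ D)) for all C ∈ C; consequently if G is cocontinuous and C has a dense family of dualizable objects, then X ⊗ GD ≅ G(FX ⊗ D). -/
open CategoryTheory Limits MonoidalCategory

open Functor.LaxMonoidal Functor.OplaxMonoidal in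
private lemma projFormula_aux1 {C : Type*} {D : Type*} [Category C] [Category D]
    [MonoidalCategory C] [MonoidalCategory D]
    (F : C ⥤ D) [F.Monoidal] (X Y Z : C) :
    (α_ (F.obj X) (F.obj Y) (F.obj Z)).inv ≫ μ F X Y ▷ F.obj Z =
      F.obj X ◁ μ F Y Z ≫ μ F X (Y ⊗ Z) ≫ F.map (α_ X Y Z).inv ≫ δ F (X ⊗ Y) Z := by
  calc (α_ (F.obj X) (F.obj Y) (F.obj Z)).inv ≫ μ F X Y ▷ F.obj Z
      = ((α_ _ _ _).inv ≫ μ F X Y ▷ F.obj Z ≫ μ F (X ⊗ Y) Z) ≫ δ F (X ⊗ Y) Z := by simp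
    _ = _ := by rw [← Functor.LaxMonoidal.associativity_inv]; simp

open Functor.LaxMonoidal Functor.OplaxMonoidal in
private lemma projFormula_aux2 {C : Type*} {D : Type*} [Category C] [Category D]
    [MonoidalCategory C] [MonoidalCategory D]
    (F : C ⥤ D) [F.Monoidal] (X Y Z : C) :
    (α_ (F.obj X) (F.obj Y) (F.obj Z)).hom ≫ F.obj X ◁ μ F Y Z =
      μ F X Y ▷ F.obj Z ≫ μ F (X ⊗ Y) Z ≫ F.map (α_ X Y Z).hom ≫ δ F X (Y ⊗ Z) := by
  calc (α_ (F.obj X) (F.obj Y) (F.obj Z)).hom ≫ F.obj X ◁ μ F Y Z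
      = ((α_ _ _ _).hom ≫ F.obj X ◁ μ F Y Z ≫ μ F X (Y ⊗ Z)) ≫ δ F X (Y ⊗ Z) := by simp
    _ = _ := by rw [← Functor.LaxMonoidal.associativity]; simp

open Functor.LaxMonoidal Functor.OplaxMonoidal in
/-- A strong monoidal functor sends an exact pairing to an exact pairing. -/
private noncomputable def projFormulaMapExactPairing
    {C : Type*} {D : Type*} [Category C] [Category D]
    [MonoidalCategory C] [MonoidalCategory D]
    (F : C ⥤ D) [F.Monoidal] (X Y : C) [ExactPairing X Y] :
    ExactPairing (F.obj X) (F.obj Y) where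
  coevaluation' := ε F ≫ F.map (η_ X Y) ≫ δ F X Y
  evaluation' := μ F Y X ≫ F.map (ε_ X Y) ≫ Functor.OplaxMonoidal.η F
  coevaluation_evaluation' := by
    calc F.obj Y ◁ (ε F ≫ F.map (η_ X Y) ≫ δ F X Y) ≫ (α_ _ _ _).inv ≫
          (μ F Y X ≫ F.map (ε_ X Y) ≫ Functor.OplaxMonoidal.η F) ▷ F.obj Y
        = F.obj Y ◁ ε F ≫ F.obj Y ◁ F.map (η_ X Y) ≫ F.obj Y ◁ δ F X Y ≫
            ((α_ _ _ _).inv ≫ μ F Y X ▷ F.obj Y) ≫ F.map (ε_ X Y) ▷ F.obj Y ≫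
            Functor.OplaxMonoidal.η F ▷ F.obj Y := by
          simp [MonoidalCategory.whiskerLeft_comp, MonoidalCategory.comp_whiskerRight]
      _ = (ρ_ (F.obj Y)).hom ≫ (λ_ (F.obj Y)).inv := by
          rw [projFormula_aux1]
          simp only [Category.assoc, Functor.Monoidal.whiskerLeft_δ_μ_assoc,
            δ_natural_left_assoc, Functor.LaxMonoidal.μ_natural_right_assoc,
            Functor.LaxMonoidal.right_unitality_assoc]
          simp only [← F.map_comp_assoc]
          rw [ExactPairing.coevaluation_evaluation]
          simp [Functor.OplaxMonoidal.left_unitality]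
  evaluation_coevaluation' := by
    calc (ε F ≫ F.map (η_ X Y) ≫ δ F X Y) ▷ F.obj X ≫ (α_ _ _ _).hom ≫
          F.obj X ◁ (μ F Y X ≫ F.map (ε_ X Y) ≫ Functor.OplaxMonoidal.η F)
        = (λ_ (F.obj X)).hom ≫ (ρ_ (F.obj X)).inv := by
          simp only [MonoidalCategory.comp_whiskerRight,
            MonoidalCategory.whiskerLeft_comp, Category.assoc]
          slice_lhs 4 5 => rw [projFormula_aux2]
          simp only [Category.assoc]
          simp only [Category.assoc, Functor.Monoidal.whiskerRight_δ_μ_assoc,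
            δ_natural_right_assoc, Functor.LaxMonoidal.μ_natural_left_assoc,
            Functor.LaxMonoidal.left_unitality_assoc]
          simp only [← F.map_comp_assoc]
          rw [ExactPairing.evaluation_coevaluation]
          simp [Functor.OplaxMonoidal.right_unitality]

/--
Let `F ⊣ G` be an adjunction of symmetric monoidal categories with `F` strong
symmetric monoidal.  Then for every dualizable object `X` of `C` and every `d : D` there is an
isomorphism `C(-, X ⊗ G d) ≅ C(-, G (F X ⊗ d))`, natural in the first variable (expressed via
the Yoneda embedding); consequently `X ⊗ G d ≅ G (F X ⊗ d)`.
-/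
theorem projection_formula_of_dualizable
    {C : Type*} {D : Type*} [Category C] [Category D]
    [MonoidalCategory C] [MonoidalCategory D] [SymmetricCategory C] [SymmetricCategory D]
    (F : C ⥤ D) [F.Monoidal] [F.Braided] (G : D ⥤ C) (adj : F ⊣ G)
    (X : C) [HasRightDual X] (d : D) :
    Nonempty (yoneda.obj (X ⊗ G.obj d) ≅ yoneda.obj (G.obj (F.obj X ⊗ d))) ∧
      Nonempty (X ⊗ G.obj d ≅ G.obj (F.obj X ⊗ d)) := by
  letI : ExactPairing (F.obj X) (F.obj (Xᘁ)) := projFormulaMapExactPairing F X (Xᘁ)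
  have i : tensorLeft (Xᘁ) ⋙ F ≅ F ⋙ tensorLeft (F.obj (Xᘁ)) :=
    NatIso.ofComponents (fun c => (Functor.Monoidal.μIso F (Xᘁ) c).symm)
      (fun f => (Functor.OplaxMonoidal.δ_natural_right F _ f).symm)
  have adj1 : F ⋙ tensorLeft (F.obj (Xᘁ)) ⊣ G ⋙ tensorLeft X :=
    Adjunction.ofNatIsoLeft ((tensorLeftAdjunction X (Xᘁ)).comp adj) i
  have adj2 : F ⋙ tensorLeft (F.obj (Xᘁ)) ⊣ tensorLeft (F.obj X) ⋙ G :=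
    adj.comp (tensorLeftAdjunction (F.obj X) (F.obj (Xᘁ)))
  have e : G ⋙ tensorLeft X ≅ tensorLeft (F.obj X) ⋙ G :=
    adj1.rightAdjointUniq adj2
  have e0 : X ⊗ G.obj d ≅ G.obj (F.obj X ⊗ d) := e.app d
  exact ⟨⟨yoneda.mapIso e0⟩, ⟨e0⟩⟩
end

section
/- Let (A,Γ) be a flat Hopf algebroid with A a Noetherian commutative ring, and let M be an (A,Γ)-comodule. Then every finitely generated A-submodule of M is contained in a subcomodule of M that is finitely generated as an A-module. Consequently M is the filtered union of its finitely generated subcomodules, and Comod(A,Γ) is locally finitely presentable. -/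
open TensorProduct

universe u

section Aux

variable {A : Type u} [CommRing A] {Γ : Type u} [CommRing Γ] [Algebra A Γ]
  {M : Type u} [AddCommGroup M] [Module A M]

/-- The range of `Γ ⊗ P → Γ ⊗ M` is monotone in `P`. -/
lemma range_lTensor_mono {P Q : Submodule A M} (h : P ≤ Q) :
    LinearMap.range (LinearMap.lTensor Γ P.subtype) ≤
      LinearMap.range (LinearMap.lTensor Γ Q.subtype) := by
  have hfac : P.subtype = Q.subtype ∘ₗ Submodule.inclusion h := rfl
  rw [hfac, LinearMap.lTensor_comp, LinearMap.range_comp]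
  exact Submodule.map_mono le_top |>.trans (by simp [Submodule.map_top])

/-- Every element of `Γ ⊗ M` lies in the image of `Γ ⊗ Q` for some f.g. `Q ≤ M`. -/
lemma exists_fg_range_lTensor (t : Γ ⊗[A] M) :
    ∃ Q : Submodule A M, Q.FG ∧ t ∈ LinearMap.range (LinearMap.lTensor Γ Q.subtype) := by
  induction t with
  | zero => exact ⟨⊥, Submodule.fg_bot, zero_mem _⟩
  | tmul γ m =>
      refine ⟨A ∙ m, Submodule.fg_span_singleton m,
        ⟨γ ⊗ₜ ⟨m, Submodule.mem_span_singleton_self m⟩, ?_⟩⟩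
      simp [LinearMap.lTensor_tmul]
  | add x y hx hy =>
      obtain ⟨Q₁, hQ₁, hx⟩ := hx
      obtain ⟨Q₂, hQ₂, hy⟩ := hy
      exact ⟨Q₁ ⊔ Q₂, hQ₁.sup hQ₂,
        add_mem (range_lTensor_mono le_sup_left hx) (range_lTensor_mono le_sup_right hy)⟩

end Aux

/--
Let `(A, Γ)` be a flat (commutative) Hopf algebroid with `A` Noetherian, and let
`M` be an `(A, Γ)`-comodule, given by a counital coassociative coaction `ρ : M → Γ ⊗[A] M`.
Then every finitely generated `A`-submodule of `M` is contained in a subcomodule of `M`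
(a submodule `P` with `ρ(P) ⊆ Γ ⊗ P`) that is finitely generated as an `A`-module.
Consequently `M` is the (filtered) union of its finitely generated subcomodules.
-/
theorem exists_fg_subcomodule
    {A Γ : Type u} [CommRing A] [IsNoetherianRing A] [CommRing Γ]
    [HopfAlgebra A Γ] [Module.Flat A Γ]
    {M : Type u} [AddCommGroup M] [Module A M]
    (ρ : M →ₗ[A] Γ ⊗[A] M)
    (hcounit : (TensorProduct.lid A M).toLinearMap ∘ₗ
      LinearMap.rTensor M (Coalgebra.counit (R := A) (A := Γ)) ∘ₗ ρ = LinearMap.id)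
    (hcoassoc : LinearMap.lTensor Γ ρ ∘ₗ ρ =
      (TensorProduct.assoc A Γ Γ M).toLinearMap ∘ₗ
        LinearMap.rTensor M (Coalgebra.comul (R := A) (A := Γ)) ∘ₗ ρ) :
    (∀ N : Submodule A M, N.FG →
      ∃ P : Submodule A M, N ≤ P ∧ P.FG ∧
        ∀ p ∈ P, ρ p ∈ LinearMap.range (LinearMap.lTensor Γ P.subtype)) ∧
    (⨆ P ∈ {P : Submodule A M |
        P.FG ∧ ∀ p ∈ P, ρ p ∈ LinearMap.range (LinearMap.lTensor Γ P.subtype)}, P) = ⊤ := by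
  have main : ∀ N : Submodule A M, N.FG →
      ∃ P : Submodule A M, N ≤ P ∧ P.FG ∧
        ∀ p ∈ P, ρ p ∈ LinearMap.range (LinearMap.lTensor Γ P.subtype) := by
    intro N hN
    -- Step 1: find a f.g. `Q` with `ρ(N) ⊆ Im (Γ ⊗ Q)`.
    have hρN : (N.map ρ).FG := hN.map ρ
    obtain ⟨s, hs⟩ := hρN
    have key : ∀ u : Finset (Γ ⊗[A] M), ∃ Q : Submodule A M, Q.FG ∧
        (u : Set (Γ ⊗[A] M)) ⊆ LinearMap.range (LinearMap.lTensor Γ Q.subtype) := by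
      intro u
      induction u using Finset.cons_induction with
      | empty => exact ⟨⊥, Submodule.fg_bot, by simp⟩
      | cons a u ha ih =>
          obtain ⟨Q₁, hQ₁, hu⟩ := ih
          obtain ⟨Q₂, hQ₂, hha⟩ := exists_fg_range_lTensor (A := A) (Γ := Γ) a
          refine ⟨Q₁ ⊔ Q₂, hQ₁.sup hQ₂, ?_⟩
          intro x hx
          rcases Finset.mem_cons.1 (by exact_mod_cast hx) with rfl | hx
          · exact range_lTensor_mono le_sup_right hha
          · exact range_lTensor_mono le_sup_left (hu hx)
    obtain ⟨Q, hQfg, hQ⟩ := key s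
    -- Step 2: put `W := N ⊔ Q`, so `N ≤ W` and `ρ(N) ⊆ Im(Γ ⊗ W)`.
    set W := N ⊔ Q with hW
    have hWfg : W.FG := hN.sup hQfg
    have hρNW : ∀ n ∈ N, ρ n ∈ LinearMap.range (LinearMap.lTensor Γ W.subtype) := by
      intro n hn
      have : ρ n ∈ N.map ρ := Submodule.mem_map_of_mem hn
      rw [← hs] at this
      refine range_lTensor_mono (le_sup_right : Q ≤ W) ?_
      exact Submodule.span_le.2 hQ this
    -- Step 3: define `P := {w ∈ W : ρ w ∈ Im (Γ ⊗ W)}`.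
    set π : M →ₗ[A] M ⧸ W := W.mkQ with hπ
    set g : M →ₗ[A] Γ ⊗[A] (M ⧸ W) := (LinearMap.lTensor Γ π) ∘ₗ ρ with hg
    set g₁ : W →ₗ[A] Γ ⊗[A] (M ⧸ W) := g ∘ₗ W.subtype with hg₁
    set P : Submodule A M := (LinearMap.ker g₁).map W.subtype with hP
    -- Exactness facts
    have hexact1 : Function.Exact (LinearMap.lTensor Γ W.subtype) (LinearMap.lTensor Γ π) :=
      lTensor_exact Γ (LinearMap.exact_subtype_mkQ W) (Submodule.mkQ_surjective W)
    have hexact2 : Function.Exact (LinearMap.lTensor Γ (LinearMap.ker g₁).subtype)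
        (LinearMap.lTensor Γ g₁) :=
      Module.Flat.lTensor_exact Γ (LinearMap.exact_subtype_ker_map g₁)
    -- membership in `Im (Γ ⊗ W)` is detected by `g`
    have hdetect : ∀ m : M, ρ m ∈ LinearMap.range (LinearMap.lTensor Γ W.subtype) ↔
        g m = 0 := by
      intro m
      rw [hg]
      simp only [LinearMap.coe_comp, Function.comp_apply]
      rw [hexact1 (ρ m)]
      simp [LinearMap.mem_range, Set.mem_range]
    -- N ≤ P
    have hNP : N ≤ P := by
      intro n hn
      refine Submodule.mem_map.2 ⟨⟨n, Submodule.mem_sup_left hn⟩, ?_, rfl⟩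
      · have : g n = 0 := (hdetect n).1 (hρNW n hn)
        simpa [hg₁, LinearMap.mem_ker] using this
    -- P is f.g.
    have hPfg : P.FG := by
      have : Module.Finite A W := Module.Finite.iff_fg.2 hWfg
      have : IsNoetherian A W := isNoetherian_of_isNoetherianRing_of_finite A W
      exact (IsNoetherian.noetherian (LinearMap.ker g₁)).map W.subtype
    refine ⟨P, hNP, hPfg, ?_⟩
    -- Step 4: P is a subcomodule.
    intro p hp
    obtain ⟨p', hp', rfl⟩ := Submodule.mem_map.1 hp
    -- `ρ p ∈ Im (Γ ⊗ W)`
    have hgp : g (W.subtype p') = 0 := hp'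
    obtain ⟨t, ht⟩ : ρ (W.subtype p') ∈ LinearMap.range (LinearMap.lTensor Γ W.subtype) :=
      (hdetect _).2 hgp
    -- key zero composite
    have hkey : ∀ (z : Γ ⊗[A] Γ) (w : W),
        (LinearMap.lTensor Γ (LinearMap.lTensor Γ π))
          ((TensorProduct.assoc A Γ Γ M) (z ⊗ₜ (w : M))) = 0 := by
      intro z w
      induction z with
      | zero => simp
      | tmul a b =>
          have : π (w : M) = 0 := by
            simp [hπ, Submodule.Quotient.mk_eq_zero, w.2]
          simp [TensorProduct.assoc_tmul, this]
      | add x y hx hy =>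
          simp [TensorProduct.add_tmul, map_add, hx, hy]
    -- `lTensor Γ g₁ t = 0`
    have hzero : LinearMap.lTensor Γ g₁ t = 0 := by
      have h1 : LinearMap.lTensor Γ g₁ t
          = LinearMap.lTensor Γ g (ρ (W.subtype p')) := by
        rw [hg₁, LinearMap.lTensor_comp, ← ht]; rfl
      rw [h1, hg, LinearMap.lTensor_comp]
      have h2 : LinearMap.lTensor Γ ρ (ρ (W.subtype p'))
          = (TensorProduct.assoc A Γ Γ M).toLinearMap
              ((LinearMap.rTensor M (Coalgebra.comul (R := A) (A := Γ))) (ρ (W.subtype p'))) := by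
        have := congrArg (fun f => f (W.subtype p')) hcoassoc
        simpa using this
      simp only [LinearMap.coe_comp, Function.comp_apply]
      rw [h2, ← ht]
      -- reduce to the key computation by induction on `t`
      clear h1 h2 ht
      induction t with
      | zero => simp
      | tmul γ w =>
          have h3 : (LinearMap.rTensor M (Coalgebra.comul (R := A) (A := Γ)))
              ((LinearMap.lTensor Γ W.subtype) (γ ⊗ₜ w))
              = (Coalgebra.comul (R := A) (A := Γ) γ) ⊗ₜ (w : M) := by
            simp [LinearMap.lTensor_tmul, LinearMap.rTensor_tmul]
          rw [h3]
          exact hkey _ w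
      | add x y hx hy => simp only [map_add, hx, hy, add_zero]
    -- conclude via left-exactness of `Γ ⊗ -`
    obtain ⟨u, hu⟩ : t ∈ LinearMap.range (LinearMap.lTensor Γ (LinearMap.ker g₁).subtype) :=
      LinearMap.mem_range.2 ((hexact2 t).1 hzero)
    -- transport along the inclusion `ker g₁ → P`
    let ι : (LinearMap.ker g₁) →ₗ[A] P :=
      LinearMap.codRestrict P (W.subtype ∘ₗ (LinearMap.ker g₁).subtype)
        (fun x => Submodule.mem_map.2 ⟨x.1, x.2, rfl⟩)
    have hcomp : P.subtype ∘ₗ ι = W.subtype ∘ₗ (LinearMap.ker g₁).subtype := rfl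
    refine ⟨LinearMap.lTensor Γ ι u, ?_⟩
    have hstep : LinearMap.lTensor Γ P.subtype (LinearMap.lTensor Γ ι u)
        = LinearMap.lTensor Γ (P.subtype ∘ₗ ι) u := by
      rw [LinearMap.lTensor_comp]; rfl
    rw [hstep, hcomp, LinearMap.lTensor_comp]
    simp only [LinearMap.coe_comp, Function.comp_apply]
    rw [hu, ht]
  refine ⟨main, ?_⟩
  rw [eq_top_iff]
  intro m _
  obtain ⟨P, hNP, hPfg, hPsub⟩ := main (A ∙ m) (Submodule.fg_span_singleton m)
  have hm : m ∈ P := hNP (Submodule.mem_span_singleton_self m)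
  have hmem : P ∈ {P : Submodule A M |
      P.FG ∧ ∀ p ∈ P, ρ p ∈ LinearMap.range (LinearMap.lTensor Γ P.subtype)} :=
    ⟨hPfg, hPsub⟩
  have hle : P ≤ ⨆ P ∈ {P : Submodule A M |
      P.FG ∧ ∀ p ∈ P, ρ p ∈ LinearMap.range (LinearMap.lTensor Γ P.subtype)}, P :=
    le_iSup₂ (f := fun (P : Submodule A M) (_ : P ∈ _) => P) P hmem
  exact hle hm
end

section
/- Let (A, 𝔪) be a complete Noetherian local ring. For each n let M_n be an A-module annihilated by 𝔪^n, with M_1 finitely generated, and let f_n : M_{n+1} → M_n be surjective A-module homomorphisms with kernel 𝔪^n M_{n+1}. Then the inverse limit M = lim M_n is a finitely generated A-module, and for each n the projection M → M_n is surjective with kernel 𝔪^n M. -/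
open IsLocalRing

universe u

/-- Mittag-Leffler style lifting: in a tower with surjective transition maps, every element
at level `n` extends to a compatible sequence. -/
theorem exists_compat_seq : ∀ (n : ℕ) (M : ℕ → Type u) (f : ∀ m, M (m + 1) → M m),
    (∀ m, Function.Surjective (f m)) → ∀ a : M n,
    ∃ x : ∀ m, M m, (∀ m, f m (x (m + 1)) = x m) ∧ x n = a := by
  intro n
  induction n with
  | zero =>
    intro M f hf a
    refine ⟨fun k => Nat.rec a (fun k xk => Function.surjInv (hf k) xk) k, fun m => ?_, rfl⟩
    exact Function.surjInv_eq (hf m) _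
  | succ n ih =>
    intro M f hf a
    obtain ⟨x', hx', hx'n⟩ := ih (fun m => M (m + 1)) (fun m => f (m + 1)) (fun m => hf (m + 1)) a
    refine ⟨fun m => Nat.casesOn m (f 0 (x' 0)) (fun k => x' k), fun m => ?_, hx'n⟩
    cases m with
    | zero => rfl
    | succ k => exact hx' k

/-- Nakayama-type iteration: if `⊤ ≤ N ⊔ I • ⊤` then `⊤ ≤ N ⊔ I ^ k • ⊤`. -/
theorem le_sup_smul_pow {A : Type*} [CommRing A] {B : Type*} [AddCommGroup B] [Module A B]
    (I : Ideal A) (N : Submodule A B) (h : ⊤ ≤ N ⊔ I • ⊤) (k : ℕ) :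
    (⊤ : Submodule A B) ≤ N ⊔ I ^ k • ⊤ := by
  induction k with
  | zero => simp [Ideal.one_eq_top]
  | succ k ih =>
    calc (⊤ : Submodule A B) ≤ N ⊔ I ^ k • ⊤ := ih
      _ ≤ N ⊔ I ^ k • (N ⊔ I • ⊤) := by
          exact sup_le_sup_left (Submodule.smul_mono le_rfl h) N
      _ = N ⊔ (I ^ k • N ⊔ I ^ (k + 1) • ⊤) := by
          rw [Submodule.smul_sup, pow_succ, ← Ideal.smul_eq_mul, Submodule.smul_assoc]
      _ ≤ N ⊔ (N ⊔ I ^ (k + 1) • ⊤) := by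
          exact sup_le_sup_left (sup_le_sup_right Submodule.smul_le_right _) N
      _ = N ⊔ I ^ (k + 1) • ⊤ := by rw [← sup_assoc, sup_idem]

/-- Dependent-choice construction of an approximating sequence. -/
theorem exists_approx_seq {σ : Type*} (T : ℕ → σ → Prop) (R : ℕ → σ → σ → Prop)
    (h0 : ∃ s, T 0 s) (hs : ∀ k s, T k s → ∃ s', T (k + 1) s' ∧ R k s s') :
    ∃ g : ℕ → σ, (∀ k, T k (g k)) ∧ ∀ k, R k (g k) (g (k + 1)) := by
  obtain ⟨s0, hs0⟩ := h0
  choose F hF1 hF2 using hs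
  let G : ∀ k, {s : σ // T k s} := fun k =>
    Nat.rec ⟨s0, hs0⟩ (fun k p => ⟨F k p.1 p.2, hF1 k p.1 p.2⟩) k
  exact ⟨fun k => (G k).1, fun k => (G k).2, fun k => hF2 k (G k).1 (G k).2⟩

/-- The inverse limit of a tower of modules `… → M (n+1) → M n → … → M 0`,
realized as the submodule of the product consisting of compatible sequences. -/
def invLimitSubmodule {A : Type*} [CommRing A] (M : ℕ → Type*)
    [∀ n, AddCommGroup (M n)] [∀ n, Module A (M n)]
    (f : ∀ n, M (n + 1) →ₗ[A] M n) : Submodule A (∀ n, M n) where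
  carrier := {x | ∀ n, f n (x (n + 1)) = x n}
  add_mem' := by
    intro x y hx hy n
    simp [map_add, hx n, hy n]
  zero_mem' := by
    intro n
    simp
  smul_mem' := by
    intro a x hx n
    simp [map_smul, hx n]


/--
Let `(A, 𝔪)` be a complete Noetherian local ring. For each `n` let `M n` be an
`A`-module annihilated by `𝔪 ^ (n+1)`, with `M 0` finitely generated, and let
`f n : M (n+1) → M n` be surjective `A`-module homomorphisms with kernel `𝔪 ^ (n+1) • M (n+1)`.
Then the inverse limit `M = lim M n` is a finitely generated `A`-module, and for each `n` the
projection `M → M n` is surjective with kernel `𝔪 ^ (n+1) • M`.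
(Here the tower is indexed so that `M n` corresponds to the module called `M_{n+1}` in the
natural-language statement.)
-/
theorem inverseLimit_finite_and_proj_ker
    {A : Type*} [CommRing A] [IsNoetherianRing A] [IsLocalRing A]
    [IsAdicComplete (maximalIdeal A) A]
    (M : ℕ → Type _) [∀ n, AddCommGroup (M n)] [∀ n, Module A (M n)]
    (f : ∀ n, M (n + 1) →ₗ[A] M n)
    (hann : ∀ n, (maximalIdeal A ^ (n + 1)) • (⊤ : Submodule A (M n)) = ⊥)
    (hfin : Module.Finite A (M 0))
    (hsurj : ∀ n, Function.Surjective (f n))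
    (hker : ∀ n, LinearMap.ker (f n) =
      (maximalIdeal A ^ (n + 1)) • (⊤ : Submodule A (M (n + 1)))) :
    Module.Finite A (invLimitSubmodule M f) ∧
      ∀ n, Function.Surjective
          ((LinearMap.proj n).comp (invLimitSubmodule M f).subtype) ∧
        LinearMap.ker ((LinearMap.proj n).comp (invLimitSubmodule M f).subtype) =
          (maximalIdeal A ^ (n + 1)) • (⊤ : Submodule A (invLimitSubmodule M f)) := by
  classical
  -- basic facts about the limit
  have hcompat : ∀ (z : invLimitSubmodule M f) (m : ℕ), f m (z.1 (m + 1)) = z.1 m :=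
    fun z m => z.2 m
  have hdown : ∀ (z : invLimitSubmodule M f) (m k : ℕ), z.1 (m + k) = 0 → z.1 m = 0 := by
    intro z m k
    induction k with
    | zero => exact id
    | succ k ih =>
      intro h
      have h' : z.1 (m + k + 1) = 0 := h
      exact ih (by rw [← hcompat z (m + k), h', map_zero])
  have hdown' : ∀ (z : invLimitSubmodule M f) (m n : ℕ), m ≤ n → z.1 n = 0 → z.1 m = 0 := by
    intro z m n h
    obtain ⟨k, rfl⟩ := Nat.exists_eq_add_of_le h
    exact hdown z m k
  -- generators of M 0 and compatible lifts
  obtain ⟨t, v, hv⟩ := Module.Finite.exists_fin (R := A) (M := M 0)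
  have hYex : ∀ i, ∃ x : ∀ m, M m, (∀ m, f m (x (m + 1)) = x m) ∧ x 0 = v i :=
    fun i => exists_compat_seq 0 M (fun m => f m) (fun m => hsurj m) (v i)
  choose Yx hYc hY0 using hYex
  have hYmem : ∀ i, Yx i ∈ invLimitSubmodule M f := fun i n => hYc i n
  set Y : Fin t → invLimitSubmodule M f := fun i => ⟨Yx i, hYmem i⟩ with hYdef
  -- the lifts generate each M n
  have hspan : ∀ n, Submodule.span A (Set.range fun i => Yx i n) = ⊤ := by
    intro n
    induction n with
    | zero =>
      have : (fun i => Yx i 0) = v := funext hY0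
      rw [this, hv]
    | succ n ih =>
      have hmap : Submodule.map (f n)
          (Submodule.span A (Set.range fun i => Yx i (n + 1))) = ⊤ := by
        rw [Submodule.map_span, ← Set.range_comp]
        have he : (⇑(f n) ∘ fun i => Yx i (n + 1)) = fun i => Yx i n := funext fun i => hYc i n
        rw [he, ih]
      have h1 : (⊤ : Submodule A (M (n + 1))) ≤
          Submodule.span A (Set.range fun i => Yx i (n + 1)) ⊔ LinearMap.ker (f n) := by
        intro z _
        have hz : f n z ∈ Submodule.map (f n)
            (Submodule.span A (Set.range fun i => Yx i (n + 1))) := by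
          rw [hmap]; trivial
        obtain ⟨y, hy, hyz⟩ := hz
        have hzeq : z = y + (z - y) := by abel
        rw [hzeq]
        refine Submodule.add_mem_sup hy ?_
        rw [LinearMap.mem_ker, map_sub, hyz, sub_self]
      rw [hker n] at h1
      have h2 := le_sup_smul_pow _ _ h1 (n + 2)
      have h3 : (maximalIdeal A ^ (n + 1)) ^ (n + 2) • (⊤ : Submodule A (M (n + 1))) = ⊥ := by
        rw [← pow_mul]
        refine le_bot_iff.mp ?_
        calc maximalIdeal A ^ ((n + 1) * (n + 2)) • (⊤ : Submodule A (M (n + 1)))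
            ≤ maximalIdeal A ^ (n + 2) • (⊤ : Submodule A (M (n + 1))) :=
              Submodule.smul_mono_left (Ideal.pow_le_pow_right (by nlinarith))
          _ = ⊥ := hann (n + 1)
      rw [h3, sup_bot_eq] at h2
      exact top_le_iff.mp h2
  -- the span of the lifts in the limit, and finite A-combinations
  set S : Submodule A (invLimitSubmodule M f) := Submodule.span A (Set.range Y) with hSdef
  obtain ⟨w, hw⟩ : ∃ w : (Fin t → A) → invLimitSubmodule M f,
      w = fun c => ∑ i, c i • Y i := ⟨_, rfl⟩
  have hwc : ∀ (c : Fin t → A) (m : ℕ), (w c).1 m = ∑ i, c i • Yx i m := by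
    intro c m
    rw [hw]
    simp [hYdef]
  have hwS : ∀ c, w c ∈ S := by
    intro c
    rw [hw]
    exact Submodule.sum_mem _ fun i _ =>
      Submodule.smul_mem _ _ (Submodule.subset_span (Set.mem_range_self i))
  have hwadd : ∀ c d, w (c + d) = w c + w d := by
    intro c d
    rw [hw]
    simp [add_smul, Finset.sum_add_distrib]
  have hwsub : ∀ c d, w c - w d = w (c - d) := by
    intro c d
    rw [hw]
    rw [← Finset.sum_sub_distrib]
    exact Finset.sum_congr rfl fun i _ => (sub_smul _ _ _).symm
  -- the key approximation step
  have hstepL : ∀ (m : ℕ) (z : invLimitSubmodule M f), z.1 m = 0 →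
      ∃ d : Fin t → A, (∀ i, d i ∈ maximalIdeal A ^ (m + 1)) ∧ (z - w d).1 (m + 1) = 0 := by
    intro m z hz
    have h1 : z.1 (m + 1) ∈ (maximalIdeal A ^ (m + 1)) • (⊤ : Submodule A (M (m + 1))) := by
      rw [← hker m, LinearMap.mem_ker, hcompat z m, hz]
    rw [← hspan (m + 1), Submodule.mem_ideal_smul_span_iff_exists_sum] at h1
    obtain ⟨a, ha, hsum⟩ := h1
    refine ⟨a, ha, ?_⟩
    have hws : (w ⇑a).1 (m + 1) = z.1 (m + 1) := by
      rw [hwc, ← hsum, Finsupp.sum_fintype]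
      intro i
      exact zero_smul A _
    have : (z - w ⇑a).1 (m + 1) = z.1 (m + 1) - (w ⇑a).1 (m + 1) := rfl
    rw [this, hws, sub_self]
  -- base approximation (level 0, no ideal constraint)
  have hbase : ∀ z : invLimitSubmodule M f, ∃ d : Fin t → A, (z - w d).1 0 = 0 := by
    intro z
    have h1 : z.1 0 ∈ Submodule.span A (Set.range fun i => Yx i 0) := by
      rw [hspan 0]; trivial
    rw [Submodule.mem_span_range_iff_exists_fun] at h1
    obtain ⟨c, hc⟩ := h1
    refine ⟨c, ?_⟩
    have : (z - w c).1 0 = z.1 0 - (w c).1 0 := rfl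
    rw [this, hwc, hc, sub_self]
  -- the ideal-smul-top over A itself
  have hsm : ∀ k : ℕ, (maximalIdeal A ^ k • ⊤ : Submodule A A) = maximalIdeal A ^ k := by
    intro k
    rw [Ideal.smul_eq_mul, Ideal.mul_top]
  -- main lemma: vanishing at level n puts you in 𝔪^(n+1) • S
  have hmain : ∀ (n : ℕ) (x : invLimitSubmodule M f), x.1 n = 0 →
      x ∈ (maximalIdeal A ^ (n + 1)) • S := by
    intro n x hx
    obtain ⟨c, hcT, hcR⟩ := exists_approx_seq
      (fun k c => (∀ i, c i ∈ maximalIdeal A ^ (n + 1)) ∧ (x - w c).1 (n + 1 + k) = 0)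
      (fun k c c' => ∀ i, c' i - c i ∈ maximalIdeal A ^ (n + 1 + k + 1))
      (by
        obtain ⟨d, hd1, hd2⟩ := hstepL n x hx
        exact ⟨d, hd1, hd2⟩)
      (by
        rintro k c ⟨hc1, hc2⟩
        obtain ⟨e, he1, he2⟩ := hstepL (n + 1 + k) (x - w c) hc2
        refine ⟨c + e, ⟨fun i => add_mem (hc1 i)
          (Ideal.pow_le_pow_right (by omega) (he1 i)), ?_⟩, fun i => by simp only [Pi.add_apply, add_sub_cancel_left]; exact he1 i⟩
        have : x - w (c + e) = x - w c - w e := by rw [hwadd]; abel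
        rw [this]
        exact he2)
    -- Cauchy estimates
    have hCa : ∀ (i : Fin t) (k l : ℕ), k ≤ l → c l i - c k i ∈ maximalIdeal A ^ (k + 1) := by
      intro i k l hkl
      induction l, hkl using Nat.le_induction with
      | base => simp only [sub_self]; exact (maximalIdeal A ^ (k + 1)).zero_mem
      | succ l hl ih =>
        have h1 := hcR l i
        have heq : c (l + 1) i - c k i = (c (l + 1) i - c l i) + (c l i - c k i) := by ring
        rw [heq]
        exact add_mem (Ideal.pow_le_pow_right (by omega) h1) ih
    -- convergence via completeness
    have hPre : ∀ i : Fin t, ∃ b : A, ∀ k,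
        c k i ≡ b [SMOD ((maximalIdeal A) ^ k • ⊤ : Submodule A A)] := by
      intro i
      refine IsPrecomplete.prec (IsAdicComplete.toIsPrecomplete) ?_
      intro k l hkl
      rw [SModEq.sub_mem, hsm]
      have h2 : c k i - c l i ∈ maximalIdeal A ^ (k + 1) := by
        rw [← neg_sub]
        exact neg_mem (hCa i k l hkl)
      exact Ideal.pow_le_pow_right (Nat.le_succ k) h2
    choose b hb using hPre
    have hbmem : ∀ i, b i ∈ maximalIdeal A ^ (n + 1) := by
      intro i
      have h1 := SModEq.sub_mem.mp (hb i (n + 1))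
      rw [hsm] at h1
      have h2 := (hcT (n + 1)).1 i
      have heq : b i = c (n + 1) i - (c (n + 1) i - b i) := by ring
      rw [heq]
      exact sub_mem h2 h1
    -- x = w b
    have hxwb : x = w b := by
      have key : ∀ m, (x - w b).1 m = 0 := by
        intro m
        have h1 : (x - w (c (m + 1))).1 m = 0 :=
          hdown' _ m (n + 1 + (m + 1)) (by omega) (hcT (m + 1)).2
        have h2 : (w (c (m + 1)) - w b).1 m = 0 := by
          rw [hwsub, hwc]
          refine Finset.sum_eq_zero fun i _ => ?_
          have hco : c (m + 1) i - b i ∈ maximalIdeal A ^ (m + 1) := by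
            have h3 := SModEq.sub_mem.mp (hb i (m + 1))
            rwa [hsm] at h3
          have h4 : (c (m + 1) i - b i) • Yx i m ∈
              (maximalIdeal A ^ (m + 1)) • (⊤ : Submodule A (M m)) :=
            Submodule.smul_mem_smul hco trivial
          rw [hann m] at h4
          exact h4
        have hsplit : x - w b = (x - w (c (m + 1))) + (w (c (m + 1)) - w b) := by abel
        have : (x - w b).1 m = (x - w (c (m + 1))).1 m + (w (c (m + 1)) - w b).1 m := by
          rw [hsplit]; rfl
        rw [this, h1, h2, add_zero]
      refine Subtype.ext (funext fun m => ?_)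
      have hm := key m
      have : x.1 m - (w b).1 m = 0 := hm
      exact sub_eq_zero.mp this
    rw [hxwb, hw]
    exact Submodule.sum_mem _ fun i _ =>
      Submodule.smul_mem_smul (hbmem i) (Submodule.subset_span (Set.mem_range_self i))
  constructor
  · -- finiteness
    rw [Module.finite_def]
    have htop : (⊤ : Submodule A (invLimitSubmodule M f)) ≤ S := by
      intro x _
      obtain ⟨d, hd⟩ := hbase x
      have h1 : x - w d ∈ (maximalIdeal A ^ (0 + 1)) • S := hmain 0 (x - w d) hd
      have h2 : x = w d + (x - w d) := by abel
      rw [h2]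
      exact Submodule.add_mem _ (hwS d) (Submodule.smul_le_right h1)
    have hte : (⊤ : Submodule A (invLimitSubmodule M f)) = S := le_antisymm htop le_top
    rw [hte, hSdef]
    exact Submodule.fg_span (Set.finite_range Y)
  · intro n
    constructor
    · -- surjectivity
      intro a
      obtain ⟨xs, hxc, hxn⟩ := exists_compat_seq n M (fun m => f m) (fun m => hsurj m) a
      exact ⟨⟨xs, fun m => hxc m⟩, hxn⟩
    · refine le_antisymm ?_ ?_
      · intro x hx
        have hx0 : x.1 n = 0 := hx
        have h1 := hmain n x hx0
        exact Submodule.smul_mono le_rfl le_top h1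
      · intro x hx
        rw [LinearMap.mem_ker]
        have hmem : ((LinearMap.proj n).comp (invLimitSubmodule M f).subtype) x ∈
            Submodule.map ((LinearMap.proj n).comp (invLimitSubmodule M f).subtype)
              ((maximalIdeal A ^ (n + 1)) • (⊤ : Submodule A (invLimitSubmodule M f))) :=
          Submodule.mem_map_of_mem hx
        rw [Submodule.map_smul''] at hmem
        have h2 : ((LinearMap.proj n).comp (invLimitSubmodule M f).subtype) x ∈
            (maximalIdeal A ^ (n + 1)) • (⊤ : Submodule A (M n)) :=
          Submodule.smul_mono le_rfl le_top hmem
        rw [hann n] at h2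
        exact h2
end

section
/- Let W be a discrete valuation ring with uniformizer p, and let N ⊆ M be finitely generated W-modules. Then N is a direct summand of M if and only if N ∩ p^k M = p^k N for all k ∈ ℕ. -/
/-!
A complement of `N` is the same thing as a linear section of `M → M ⧸ N`. Write `M ⧸ N` as a
free module times a direct sum of cyclic modules `W ⧸ (q ^ e)`. The free part lifts by
projectivity. A generator `y` of `W ⧸ (q ^ e)` lifts to some `m` with `q ^ e • m ∈ N ⊓ q ^ e M`,
which by purity equals `q ^ e • n` with `n ∈ N`; then `m - n` is a lift of `y` killed by `q ^ e`.
Since every nonzero ideal of `W` is a power of `(p)`, the hypothesis is purity for all ideals.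
Conversely, if `M = N ⊕ N'` then the projection onto `N` carries `I • M` onto `I • N`.
-/

open Submodule DirectSum

namespace Submodule

section CommRing

variable {R M : Type*} [CommRing R] [AddCommGroup M] [Module R M]

theorem inf_ideal_smul_top_eq_of_isCompl {N N' : Submodule R M} (h : IsCompl N N')
    (I : Ideal R) : N ⊓ I • ⊤ = I • N := by
  refine le_antisymm (fun x ⟨hxN, hxI⟩ => ?_) (le_inf smul_le_right (smul_mono_right I le_top))
  have hπ : N.projection N' h x ∈ I • (⊤ : Submodule R M).map (N.projection N' h) := by
    rw [← map_smul'']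
    exact mem_map_of_mem hxI
  rwa [map_top, range_projection, projection_apply_of_mem_left h hxN] at hπ

theorem exists_isCompl_of_mkQ_comp_eq_id {N : Submodule R M} (s : (M ⧸ N) →ₗ[R] M)
    (hs : N.mkQ ∘ₗ s = LinearMap.id) : ∃ N', IsCompl N N' := by
  have hsec (y : M ⧸ N) : Quotient.mk (s y) = y := LinearMap.congr_fun hs y
  let π : M →ₗ[R] N := (LinearMap.id - s ∘ₗ N.mkQ).codRestrict N fun x => by
    simp [← Quotient.mk_eq_zero, hsec]
  refine ⟨_, LinearMap.isCompl_of_proj (f := π) fun x => Subtype.ext ?_⟩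
  change x - s (N.mkQ x) = x
  rw [mkQ_apply, (Quotient.mk_eq_zero N).mpr x.2, map_zero, sub_zero]

theorem exists_mkQ_eq_and_smul_eq_zero {N : Submodule R M} {a : R}
    (hN : N ⊓ Ideal.span {a} • ⊤ ≤ Ideal.span {a} • N) {y : M ⧸ N} (hy : a • y = 0) :
    ∃ x, N.mkQ x = y ∧ a • x = 0 := by
  obtain ⟨m, rfl⟩ := N.mkQ_surjective y
  have ham : a • m ∈ N := by
    rwa [← map_smul, mkQ_apply, Quotient.mk_eq_zero] at hy
  have ham' : a • m ∈ Ideal.span {a} • N :=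
    hN ⟨ham, smul_mem_smul (Ideal.mem_span_singleton_self a) mem_top⟩
  rw [ideal_span_singleton_smul, mem_smul_pointwise_iff_exists] at ham'
  obtain ⟨n, hn, hnm⟩ := ham'
  refine ⟨m - n, ?_, by rw [smul_sub, hnm, sub_self]⟩
  simp [(Quotient.mk_eq_zero N).mpr hn]

theorem exists_lift_of_quotient_span_singleton {N : Submodule R M} {a : R}
    (hN : N ⊓ Ideal.span {a} • ⊤ ≤ Ideal.span {a} • N) (g : (R ⧸ R ∙ a) →ₗ[R] M ⧸ N) :
    ∃ h : (R ⧸ R ∙ a) →ₗ[R] M, N.mkQ ∘ₗ h = g := by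
  have hy : a • g (Quotient.mk 1) = 0 := by
    rw [← map_smul, ← Quotient.mk_smul, smul_eq_mul, mul_one,
      (Quotient.mk_eq_zero _).mpr (mem_span_singleton_self a), map_zero]
  obtain ⟨x, hx, hax⟩ := exists_mkQ_eq_and_smul_eq_zero hN hy
  refine ⟨liftQSpanSingleton a (LinearMap.toSpanSingleton R M x) (by simpa using hax), ?_⟩
  ext
  simp only [LinearMap.comp_apply, mkQ_apply, liftQSpanSingleton_apply,
    LinearMap.toSpanSingleton_apply, one_smul]
  exact hx

theorem exists_lift_of_prod_directSum {N : Submodule R M} {F : Type*} [AddCommGroup F]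
    [Module R F] [Module.Projective R F] {ι : Type*} [DecidableEq ι] {a : ι → R}
    (hN : ∀ i, N ⊓ Ideal.span {a i} • ⊤ ≤ Ideal.span {a i} • N)
    (g : F × (⨁ i, R ⧸ R ∙ a i) →ₗ[R] M ⧸ N) :
    ∃ h : F × (⨁ i, R ⧸ R ∙ a i) →ₗ[R] M, N.mkQ ∘ₗ h = g := by
  obtain ⟨hF, hhF⟩ :=
    Module.projective_lifting_property N.mkQ (g ∘ₗ LinearMap.inl R _ _) N.mkQ_surjective
  choose hT hhT using fun i => exists_lift_of_quotient_span_singleton (hN i)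
    (g ∘ₗ LinearMap.inr R _ _ ∘ₗ lof R ι (fun i => R ⧸ R ∙ a i) i)
  refine ⟨hF.coprod (toModule R ι M hT), LinearMap.prod_ext ?_ (DirectSum.linearMap_ext R ?_)⟩
  · rw [LinearMap.comp_assoc, LinearMap.coprod_inl, hhF]
  · exact fun i => LinearMap.ext fun x => by simpa using LinearMap.congr_fun (hhT i) x

end CommRing

theorem exists_isCompl_of_inf_ideal_smul_top_le {R M : Type*} [CommRing R] [IsDomain R]
    [IsPrincipalIdealRing R] [AddCommGroup M] [Module R M] [Module.Finite R M]
    {N : Submodule R M} (hN : ∀ I : Ideal R, N ⊓ I • ⊤ ≤ I • N) : ∃ N', IsCompl N N' := by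
  classical
  obtain ⟨n, ι, _, q, -, e, ⟨φ⟩⟩ := Module.equiv_free_prod_directSum R (M ⧸ N)
  obtain ⟨h, hh⟩ := exists_lift_of_prod_directSum (fun i => hN _) φ.symm.toLinearMap
  refine exists_isCompl_of_mkQ_comp_eq_id (h ∘ₗ φ) ?_
  rw [← LinearMap.comp_assoc, hh, LinearEquiv.symm_comp]

end Submodule

theorem IsDiscreteValuationRing.inf_ideal_smul_top_le {W M : Type*} [CommRing W] [IsDomain W]
    [IsDiscreteValuationRing W] [AddCommGroup M] [Module W M] {p : W} (hp : Irreducible p)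
    {N : Submodule W M} (hN : ∀ k : ℕ, N ⊓ (Ideal.span {p} ^ k) • ⊤ ≤ (Ideal.span {p} ^ k) • N)
    (I : Ideal W) : N ⊓ I • ⊤ ≤ I • N := by
  rcases eq_or_ne I ⊥ with rfl | hI
  · simp
  obtain ⟨k, rfl⟩ := ideal_eq_span_pow_irreducible hI hp
  rw [← Ideal.span_singleton_pow]
  exact hN k

/--
Let `W` be a discrete valuation ring with uniformizer `p`, and let `N ⊆ M` be
finitely generated `W`-modules. Then `N` is a direct summand of `M` if and only if
`N ∩ p^k M = p^k N` for all `k : ℕ`.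
-/
theorem isDirectSummand_iff_inf_smul
    {W : Type*} [CommRing W] [IsDomain W] [IsDiscreteValuationRing W]
    (p : W) (hp : Irreducible p)
    {M : Type*} [AddCommGroup M] [Module W M] [Module.Finite W M]
    (N : Submodule W M) :
    (∃ N' : Submodule W M, IsCompl N N') ↔
      ∀ k : ℕ, N ⊓ (Ideal.span {p} ^ k) • (⊤ : Submodule W M) =
        (Ideal.span {p} ^ k) • N := by
  refine ⟨fun ⟨N', h⟩ k => inf_ideal_smul_top_eq_of_isCompl h _, fun h => ?_⟩
  exact exists_isCompl_of_inf_ideal_smul_top_le <|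
    IsDiscreteValuationRing.inf_ideal_smul_top_le hp fun k => (h k).le
end
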